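/- Let A, B, C ∈ ℂ^{r×r} with C + kI invertible for all k ≥ 0 and AB = BA, and let s ≥ 0 be an integer. Then ₂F₁(A + sI, B; C; x) = ∑_{k=0}^{s} C(s,k) (B)_k x^k ₂F₁(A + kI, B + kI; C + kI; x) (C)_k^{-1}, for |x| < 1, where C(s,k) is the binomial coefficient. (Assume A + jI invertible for 0 ≤ j < s so the iterated contiguous relations apply.) -/

import Mathlib

open Matrix Complex Finset

/-- Matrix Pochhammer symbol: `(A)_0 = I`, `(A)_{n+1} = (A)_n (A + nI)`. -/
noncomputable def poch {r : ℕ} (A : Matrix (Fin r) (Fin r) ℂ) : ℕ → Matrix (Fin r) (Fin r) ℂ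
  | 0 => 1
  | n + 1 => poch A n * (A + (n : ℂ) • 1)

/-- Gauss hypergeometric matrix function. -/
noncomputable def F21 {r : ℕ} (A B C : Matrix (Fin r) (Fin r) ℂ) (x : ℂ) :
    Matrix (Fin r) (Fin r) ℂ :=
  ∑' n : ℕ, ((n.factorial : ℂ)⁻¹ * x ^ n) • (poch A n * poch B n * (poch C n)⁻¹)

/-!
Termwise, `(A + I)_{n+1} = (A)_{n+1} + (n + 1) (A + I)_n`, and `B` commutes with `(A + I)_n`;
this gives the contiguous relation
`₂F₁(A + I, B; C; x) = ₂F₁(A, B; C; x) + x B ₂F₁(A + I, B + I; C + I; x) C⁻¹`,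
all series converging for `‖x‖ < 1` by the ratio test since `‖(C + kI)⁻¹‖ ≤ 1 / (k - ‖C‖)`.
Applying it to `A + sI` and the induction hypothesis to both `(A, B, C)` and
`(A + I, B + I, C + I)`, Pascal's rule merges the two binomial sums.
-/

theorem Finset.sum_range_choose_succ_mul_pow_smul {R M : Type*} [CommSemiring R]
    [AddCommMonoid M] [Module R M] (x : R) (s : ℕ) (T : ℕ → M) :
    ∑ k ∈ range (s + 2), (((s + 1).choose k : R) * x ^ k) • T k =
      ∑ k ∈ range (s + 1), ((s.choose k : R) * x ^ k) • T k +
        x • ∑ k ∈ range (s + 1), ((s.choose k : R) * x ^ k) • T (k + 1) := by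
  have h := sum_choose_succ_nsmul (fun i _ => x ^ i • T i) s
  simp only [smul_sum, mul_smul, Nat.cast_smul_eq_nsmul] at h ⊢
  rw [h]
  congr 1
  refine sum_congr rfl fun k _ => ?_
  rw [smul_comm x, pow_succ', mul_smul]

section Pochhammer

variable {r : ℕ}

theorem add_one_add_natCast_smul_one (A : Matrix (Fin r) (Fin r) ℂ) (k : ℕ) :
    A + 1 + (k : ℂ) • 1 = A + ((k + 1 : ℕ) : ℂ) • 1 := by
  rw [Nat.cast_succ, add_smul, one_smul, add_assoc, add_comm 1]

theorem Commute.add_natCast_smul_one_right {M A : Matrix (Fin r) (Fin r) ℂ} (h : Commute M A)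
    (k : ℕ) : Commute M (A + (k : ℂ) • 1) :=
  h.add_right ((Commute.one_right M).smul_right _)

theorem Commute.poch_right {M A : Matrix (Fin r) (Fin r) ℂ} (h : Commute M A) (n : ℕ) :
    Commute M (poch A n) := by
  induction n with
  | zero => exact Commute.one_right M
  | succ n ih => exact ih.mul_right (h.add_natCast_smul_one_right n)

theorem poch_succ' (A : Matrix (Fin r) (Fin r) ℂ) (n : ℕ) :
    poch A (n + 1) = A * poch (A + 1) n := by
  induction n with
  | zero => simp [poch]
  | succ n ih => rw [poch, ih, poch, mul_assoc, add_one_add_natCast_smul_one]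

theorem poch_add_one_succ (A : Matrix (Fin r) (Fin r) ℂ) (n : ℕ) :
    poch (A + 1) (n + 1) = poch A (n + 1) + ((n + 1 : ℕ) : ℂ) • poch (A + 1) n := by
  have hA : A * poch (A + 1) n = poch (A + 1) n * A :=
    ((Commute.refl A).add_right (Commute.one_right A)).poch_right n
  rw [poch, poch_succ', hA, add_one_add_natCast_smul_one, mul_add, mul_smul_comm, mul_one]

theorem inv_poch_succ' (C : Matrix (Fin r) (Fin r) ℂ) (n : ℕ) :
    (poch C (n + 1))⁻¹ = (poch (C + 1) n)⁻¹ * C⁻¹ := by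
  rw [poch_succ', Matrix.mul_inv_rev]

end Pochhammer

noncomputable def F21Term {r : ℕ} (A B C : Matrix (Fin r) (Fin r) ℂ) (x : ℂ) (n : ℕ) :
    Matrix (Fin r) (Fin r) ℂ :=
  ((n.factorial : ℂ)⁻¹ * x ^ n) • (poch A n * poch B n * (poch C n)⁻¹)

theorem F21Term_zero {r : ℕ} (A B C : Matrix (Fin r) (Fin r) ℂ) (x : ℂ) :
    F21Term A B C x 0 = 1 := by
  simp [F21Term, poch]

theorem norm_inv_factorial_mul_pow (x : ℂ) (n : ℕ) :
    ‖(n.factorial : ℂ)⁻¹ * x ^ n‖ = ∏ k ∈ range n, ‖x‖ / (k + 1) := by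
  rw [prod_div_distrib, prod_const, card_range, norm_mul, norm_inv, norm_natCast, norm_pow,
    inv_mul_eq_div]
  congr
  exact_mod_cast (prod_range_add_one_eq_factorial n).symm

theorem inv_factorial_succ_mul_pow_succ_mul (x : ℂ) (n : ℕ) :
    ((n + 1).factorial : ℂ)⁻¹ * x ^ (n + 1) * ((n + 1 : ℕ) : ℂ) =
      x * ((n.factorial : ℂ)⁻¹ * x ^ n) := by
  rw [Nat.factorial_succ]
  push_cast
  field_simp
  ring

section Summability

-- Summability does not depend on the norm; the ℓ∞ operator norm is submultiplicative.
attribute [local instance] Matrix.linftyOpNormedRing Matrix.linftyOpNormedAlgebra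

open Filter Topology

variable {r : ℕ}

theorem Matrix.linfty_opNorm_one_le : ‖(1 : Matrix (Fin r) (Fin r) ℂ)‖ ≤ 1 := by
  cases isEmpty_or_nonempty (Fin r)
  · simp [Subsingleton.elim (1 : Matrix (Fin r) (Fin r) ℂ) 0]
  · exact norm_one.le

theorem norm_poch_le (A : Matrix (Fin r) (Fin r) ℂ) (n : ℕ) :
    ‖poch A n‖ ≤ ∏ k ∈ range n, (‖A‖ + k) := by
  induction n with
  | zero => exact linfty_opNorm_one_le
  | succ n ih =>
    rw [poch, prod_range_succ]
    refine (norm_mul_le _ _).trans (mul_le_mul ih ?_ (norm_nonneg _) (by positivity))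
    refine (norm_add_le _ _).trans (add_le_add_right ?_ _)
    rw [norm_smul, norm_natCast]
    exact mul_le_of_le_one_right (Nat.cast_nonneg n) linfty_opNorm_one_le

theorem norm_inv_poch_le (C : Matrix (Fin r) (Fin r) ℂ) (n : ℕ) :
    ‖(poch C n)⁻¹‖ ≤ ∏ k ∈ range n, ‖(C + (k : ℂ) • 1)⁻¹‖ := by
  induction n with
  | zero => simpa [poch] using linfty_opNorm_one_le
  | succ n ih =>
    rw [poch, Matrix.mul_inv_rev, prod_range_succ, mul_comm (∏ k ∈ range n, _)]
    exact (norm_mul_le _ _).trans (mul_le_mul_of_nonneg_left ih (norm_nonneg _))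

theorem norm_inv_add_natCast_smul_one_le (C : Matrix (Fin r) (Fin r) ℂ) {n : ℕ}
    (hn : ‖C‖ < n) : ‖(C + (n : ℂ) • 1)⁻¹‖ ≤ ((n : ℝ) - ‖C‖)⁻¹ := by
  set u := C + (n : ℂ) • 1
  have hpos : 0 < (n : ℝ) - ‖C‖ := sub_pos.2 hn
  by_cases hu : IsUnit u.det
  swap
  · rw [Matrix.nonsing_inv_apply_not_isUnit u hu, norm_zero]
    positivity
  have hsmul : (n : ℂ) • u⁻¹ = 1 - u⁻¹ * C := by
    rw [← Matrix.nonsing_inv_mul u hu, mul_add, mul_smul_comm, mul_one, add_sub_cancel_left]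
  have hle : (n : ℝ) * ‖u⁻¹‖ ≤ 1 + ‖u⁻¹‖ * ‖C‖ := by
    calc (n : ℝ) * ‖u⁻¹‖ = ‖1 - u⁻¹ * C‖ := by rw [← hsmul, norm_smul, norm_natCast]
      _ ≤ ‖(1 : Matrix (Fin r) (Fin r) ℂ)‖ + ‖u⁻¹ * C‖ := norm_sub_le _ _
      _ ≤ 1 + ‖u⁻¹‖ * ‖C‖ := add_le_add linfty_opNorm_one_le (norm_mul_le _ _)
  rw [← one_div (_ - _), le_div_iff₀ hpos]
  linarith

theorem summable_F21Term (A B C : Matrix (Fin r) (Fin r) ℂ) {x : ℂ} (hx : ‖x‖ < 1) :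
    Summable (F21Term A B C x) := by
  set ρ : ℕ → ℝ := fun k => ‖x‖ / (k + 1) * ((‖A‖ + k) * (‖B‖ + k) * ‖(C + (k : ℂ) • 1)⁻¹‖)
  have hρ_nonneg : ∀ k, 0 ≤ ρ k := fun k => by positivity
  have hbound : ∀ n, ‖F21Term A B C x n‖ ≤ ∏ k ∈ range n, ρ k := by
    intro n
    simp only [ρ, prod_mul_distrib]
    rw [F21Term, norm_smul, norm_inv_factorial_mul_pow]
    gcongr
    refine (norm_mul_le _ _).trans ?_
    gcongr
    · exact (norm_mul_le _ _).trans (by gcongr; exacts [norm_poch_le A n, norm_poch_le B n])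
    · exact norm_inv_poch_le C n
  have hρ_le : ∀ᶠ k in atTop, ρ k ≤ (1 + ‖x‖) / 2 := by
    have hA : Tendsto (fun k : ℕ => (‖A‖ + k) / (1 + k)) atTop (𝓝 1) := by
      simpa using tendsto_add_mul_div_add_mul_atTop_nhds ‖A‖ (1 : ℝ) 1 one_ne_zero
    have hB : Tendsto (fun k : ℕ => (‖B‖ + k) / (-‖C‖ + k)) atTop (𝓝 1) := by
      simpa using tendsto_add_mul_div_add_mul_atTop_nhds ‖B‖ (-‖C‖) 1 one_ne_zero
    have hlim := (tendsto_const_nhds (x := ‖x‖)).mul (hA.mul hB)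
    rw [mul_one, mul_one] at hlim
    filter_upwards [hlim.eventually_le_const (show ‖x‖ < (1 + ‖x‖) / 2 by linarith),
      eventually_gt_atTop ⌈‖C‖⌉₊]
      with k hk hkC
    refine le_trans ?_ hk
    have hinv := norm_inv_add_natCast_smul_one_le C (Nat.lt_of_ceil_lt hkC)
    calc ρ k = ‖x‖ * ((‖A‖ + k) / (1 + k) * ((‖B‖ + k) * ‖(C + (k : ℂ) • 1)⁻¹‖)) := by ring
      _ ≤ ‖x‖ * ((‖A‖ + k) / (1 + k) * ((‖B‖ + k) * ((k : ℝ) - ‖C‖)⁻¹)) := by gcongr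
      _ = ‖x‖ * ((‖A‖ + k) / (1 + k) * ((‖B‖ + k) / (-‖C‖ + k))) := by ring
  refine .of_norm_bounded
    (summable_of_ratio_norm_eventually_le (show (1 + ‖x‖) / 2 < 1 by linarith) ?_) hbound
  filter_upwards [hρ_le] with k hk
  rw [prod_range_succ, norm_mul, Real.norm_of_nonneg (hρ_nonneg k), mul_comm]
  exact mul_le_mul_of_nonneg_right hk (norm_nonneg _)

end Summability

section Contiguous

variable {r : ℕ} {A B C : Matrix (Fin r) (Fin r) ℂ} {x : ℂ}

theorem F21Term_add_one_succ (hAB : Commute A B) (n : ℕ) :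
    F21Term (A + 1) B C x (n + 1) =
      F21Term A B C x (n + 1) + x • (B * F21Term (A + 1) (B + 1) (C + 1) x n * C⁻¹) := by
  have hB : B * poch (A + 1) n = poch (A + 1) n * B :=
    (hAB.symm.add_right (Commute.one_right B)).poch_right n
  rw [F21Term, F21Term, F21Term, poch_add_one_succ, add_mul, add_mul, smul_add, smul_mul_assoc,
    smul_mul_assoc, smul_smul, inv_factorial_succ_mul_pow_succ_mul]
  congr 1
  rw [poch_succ' B, inv_poch_succ' C, mul_smul, Matrix.mul_smul, Matrix.smul_mul]
  simp only [← mul_assoc, hB]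

theorem F21_add_one_left (hAB : Commute A B) (hx : ‖x‖ < 1) :
    F21 (A + 1) B C x = F21 A B C x + x • (B * F21 (A + 1) (B + 1) (C + 1) x * C⁻¹) := by
  have hA := summable_F21Term A B C hx
  have hA' := summable_F21Term (A + 1) (B + 1) (C + 1) hx
  have hshift : Summable fun n => x • (B * F21Term (A + 1) (B + 1) (C + 1) x n * C⁻¹) :=
    ((hA'.mul_left B).mul_right C⁻¹).const_smul x
  change ∑' n, F21Term (A + 1) B C x n = ∑' n, F21Term A B C x n +
    x • (B * (∑' n, F21Term (A + 1) (B + 1) (C + 1) x n) * C⁻¹)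
  rw [(summable_F21Term (A + 1) B C hx).tsum_eq_zero_add, hA.tsum_eq_zero_add, F21Term_zero,
    F21Term_zero]
  simp_rw [F21Term_add_one_succ hAB]
  rw [((summable_nat_add_iff 1).2 hA).tsum_add hshift,
    ((hA'.mul_left B).mul_right C⁻¹).tsum_const_smul, (hA'.mul_left B).tsum_mul_right,
    hA'.tsum_mul_left, add_assoc]

end Contiguous

noncomputable def F21Shift {r : ℕ} (A B C : Matrix (Fin r) (Fin r) ℂ) (x : ℂ) (k : ℕ) :
    Matrix (Fin r) (Fin r) ℂ :=
  poch B k * F21 (A + (k : ℂ) • 1) (B + (k : ℂ) • 1) (C + (k : ℂ) • 1) x * (poch C k)⁻¹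

theorem mul_F21Shift_add_one_mul_inv {r : ℕ} (A B C : Matrix (Fin r) (Fin r) ℂ) (x : ℂ) (k : ℕ) :
    B * F21Shift (A + 1) (B + 1) (C + 1) x k * C⁻¹ = F21Shift A B C x (k + 1) := by
  simp only [F21Shift, add_one_add_natCast_smul_one, inv_poch_succ', poch_succ' B, mul_assoc]

theorem F21_add_natCast_smul_one_left {r : ℕ} {A B C : Matrix (Fin r) (Fin r) ℂ} {x : ℂ}
    (hAB : Commute A B) (hx : ‖x‖ < 1) (s : ℕ) :
    F21 (A + (s : ℂ) • 1) B C x =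
      ∑ k ∈ range (s + 1), ((s.choose k : ℂ) * x ^ k) • F21Shift A B C x k := by
  induction s generalizing A B C with
  | zero => simp [F21Shift, poch]
  | succ s ih =>
    have hAB' : Commute (A + 1) (B + 1) :=
      (hAB.add_right (Commute.one_right A)).add_left (Commute.one_left _)
    rw [Nat.cast_succ, add_smul, one_smul, ← add_assoc,
      F21_add_one_left (hAB.symm.add_natCast_smul_one_right s).symm hx, add_right_comm,
      ih hAB, ih hAB', sum_range_choose_succ_mul_pow_smul]
    simp only [mul_sum, sum_mul, mul_smul_comm, smul_mul_assoc, mul_F21Shift_add_one_mul_inv]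

theorem stmt_8_general {r : ℕ} (A B C : Matrix (Fin r) (Fin r) ℂ) (s : ℕ)
    (hAB : A * B = B * A)
    (x : ℂ) (hx : ‖x‖ < 1) :
    F21 (A + (s : ℂ) • 1) B C x =
      ∑ k ∈ Finset.range (s + 1), ((s.choose k : ℂ) * x ^ k) •
        (poch B k * F21 (A + (k : ℂ) • 1) (B + (k : ℂ) • 1) (C + (k : ℂ) • 1) x *
          (poch C k)⁻¹) :=
  F21_add_natCast_smul_one_left hAB hx s

/-- Binomial-type recursion formula for ₂F₁. -/
theorem stmt_8 {r : ℕ} (A B C : Matrix (Fin r) (Fin r) ℂ) (s : ℕ)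
    (hC : ∀ k : ℕ, IsUnit (C + (k : ℂ) • 1)) (hAB : A * B = B * A)
    (hA : ∀ j < s, IsUnit (A + (j : ℂ) • 1))
    (x : ℂ) (hx : ‖x‖ < 1) :
    F21 (A + (s : ℂ) • 1) B C x =
      ∑ k ∈ Finset.range (s + 1), ((s.choose k : ℂ) * x ^ k) •
        (poch B k * F21 (A + (k : ℂ) • 1) (B + (k : ℂ) • 1) (C + (k : ℂ) • 1) x *
          (poch C k)⁻¹) :=
  stmt_8_general A B C s hAB x hx
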